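/- Fix an integer k ≥ 2. Consider bootstrap percolation on Q_{k,n} where each vertex is initially infected independently with probability p = 1/2 − n^{−k/2}, and let the infection threshold be r = ⌈N/2⌉ + C(3k, 2k), where N = Σ_{i=1}^k C(n,i) and C(3k,2k) is a binomial coefficient. Then there exists an absolute constant δ > 0 such that for all sufficiently large n and every vertex x ∈ V(Q_{k,n}), P(x ∈ A_{1,r}) ≥ 1/2 + δ. -/

import Mathlib

open Finset Filter
open scoped Classical

noncomputable section

/-- The infected set after `i` steps of `r`-neighbour bootstrap percolation on the graph `G`,
starting from the initial infected set `A0`: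
`A_{i+1} = A_i ∪ {v : |N(v) ∩ A_i| ≥ r}`. -/
def bootSets {V : Type*} [Fintype V] [DecidableEq V] (G : SimpleGraph V) (r : ℕ)
    (A0 : Finset V) : ℕ → Finset V
  | 0 => A0
  | i + 1 =>
      bootSets G r A0 i ∪
        Finset.univ.filter fun v => r ≤ (G.neighborFinset v ∩ bootSets G r A0 i).card

/-- `A0` percolates under the `r`-neighbour bootstrap process on `G`. -/
def percolates {V : Type*} [Fintype V] [DecidableEq V] (G : SimpleGraph V) (r : ℕ)
    (A0 : Finset V) : Prop :=
  ∃ i, bootSets G r A0 i = Finset.univ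

/-- The probability that the initial infected set is exactly `A`, when every vertex is
infected independently with probability `p`. -/
def configProb {V : Type*} [Fintype V] [DecidableEq V] (p : ℝ) (A : Finset V) : ℝ :=
  p ^ A.card * (1 - p) ^ (Fintype.card V - A.card)

/-- The probability of the event `E` about the initial infected set, when every vertex is
infected independently with probability `p`. -/
def probEvent {V : Type*} [Fintype V] [DecidableEq V] (p : ℝ) (E : Finset V → Prop) : ℝ :=
  ∑ A : Finset V, if E A then configProb p A else 0

/-- The generalized hypercube `Q_{k,n}`: vertices are `{0,1}^n`, two vertices being adjacent
iff their Hamming distance is between `1` and `k`.  The usual hypercube `Q_n` is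
`cubeGraph n 1`. -/
def cubeGraph (n k : ℕ) : SimpleGraph (Fin n → Bool) where
  Adj x y := 1 ≤ hammingDist x y ∧ hammingDist x y ≤ k
  symm := by
    refine ⟨fun x y h => ?_⟩
    show 1 ≤ hammingDist y x ∧ hammingDist y x ≤ k
    rwa [hammingDist_comm]
  loopless := by
    refine ⟨fun x h => ?_⟩
    simp [hammingDist_self] at h

/-- The critical probability for `r`-neighbour bootstrap percolation on `Q_{k,n}` where every
vertex is initially infected independently with probability `p`:
the supremum of all `p ∈ (0,1)` for which percolation has probability at most `1/2`. -/
def critProb (n k r : ℕ) : ℝ :=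
  sSup {p : ℝ | p ∈ Set.Ioo (0 : ℝ) 1 ∧
    probEvent p (fun A0 => percolates (cubeGraph n k) r A0) ≤ 1 / 2}

/-- The `Boot1(t)` process with base threshold `r`: at step `1` the threshold is `r - t`,
afterwards it is `r`. -/
def boot1Sets {V : Type*} [Fintype V] [DecidableEq V] (G : SimpleGraph V) (r t : ℕ)
    (A0 : Finset V) : ℕ → Finset V
  | 0 => A0
  | 1 => A0 ∪ Finset.univ.filter fun v => r - t ≤ (G.neighborFinset v ∩ A0).card
  | i + 2 =>
      boot1Sets G r t A0 (i + 1) ∪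
        Finset.univ.filter fun v =>
          r ≤ (G.neighborFinset v ∩ boot1Sets G r t A0 (i + 1)).card

/-- The `Boot2(t)` (= `Boot3(t)`) process with base threshold `r`: at step `1` the threshold
is `r - 2t`, at step `2` it is `r - t`, and afterwards it is `r`. -/
def boot2Sets {V : Type*} [Fintype V] [DecidableEq V] (G : SimpleGraph V) (r t : ℕ)
    (A0 : Finset V) : ℕ → Finset V
  | 0 => A0
  | 1 => A0 ∪ Finset.univ.filter fun v => r - 2 * t ≤ (G.neighborFinset v ∩ A0).card
  | 2 =>
      boot2Sets G r t A0 1 ∪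
        Finset.univ.filter fun v =>
          r - t ≤ (G.neighborFinset v ∩ boot2Sets G r t A0 1).card
  | i + 3 =>
      boot2Sets G r t A0 (i + 2) ∪
        Finset.univ.filter fun v =>
          r ≤ (G.neighborFinset v ∩ boot2Sets G r t A0 (i + 2)).card

/-!
The event `x ∈ A₁` only depends on `x` and its `N` neighbours, so
`P(x ∈ A₁) = p + (1 - p) P(Bin(N, p) ≥ r)`. For `p = 1/2 - ε` with `ε² N ≤ k`, the threshold
`r = ⌈N/2⌉ + C(3k, 2k)` is within `O(1)` of the median, and each of the `≈ √N / 8` binomial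
probabilities just above `r` is at least `e^{-O(k)} C(N, N/2) 2^{-N} ≳ e^{-O(k)} / √N`. Hence
`P(Bin(N, p) ≥ r)` is bounded below by a constant depending only on `k`, which beats the deficit
`ε ≤ 1/n` of `p` below `1/2`.
-/

open Real

namespace Nat

theorem sixteen_pow_le_mul_centralBinom_sq {m : ℕ} (hm : 0 < m) :
    16 ^ m ≤ 4 * m * centralBinom m ^ 2 := by
  induction m with
  | zero => omega
  | succ m ih =>
    rcases Nat.eq_zero_or_pos m with rfl | hm
    · decide
    have key : (m + 1) * centralBinom (m + 1) = 2 * (2 * m + 1) * centralBinom m :=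
      succ_mul_centralBinom_succ m
    refine Nat.le_of_mul_le_mul_left ?_ (succ_pos m)
    calc (m + 1) * 16 ^ (m + 1) = 16 * (m + 1) * 16 ^ m := by ring
      _ ≤ 16 * (m + 1) * (4 * m * centralBinom m ^ 2) := by gcongr; exact ih hm
      _ ≤ 16 * (2 * m + 1) ^ 2 * centralBinom m ^ 2 := by
          have : (m + 1) * (4 * m) ≤ (2 * m + 1) ^ 2 := by nlinarith
          calc 16 * (m + 1) * (4 * m * centralBinom m ^ 2)
              = 16 * ((m + 1) * (4 * m)) * centralBinom m ^ 2 := by ring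
            _ ≤ _ := by gcongr
      _ = (m + 1) * (4 * (m + 1) * centralBinom (m + 1) ^ 2) := by
          rw [show (m + 1) * (4 * (m + 1) * centralBinom (m + 1) ^ 2)
            = 4 * ((m + 1) * centralBinom (m + 1)) ^ 2 by ring, key]
          ring

theorem four_pow_le_mul_choose_half_sq {M : ℕ} (hM : 0 < M) :
    4 ^ M ≤ 16 * M * M.choose ((M + 1) / 2) ^ 2 := by
  obtain ⟨m, rfl | rfl⟩ := M.even_or_odd'
  · have hm : 0 < m := by omega
    rw [show (2 * m + 1) / 2 = m by omega, ← centralBinom_eq_two_mul_choose, pow_mul]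
    calc (4 ^ 2) ^ m = 16 ^ m := by norm_num
      _ ≤ 4 * m * centralBinom m ^ 2 := sixteen_pow_le_mul_centralBinom_sq hm
      _ ≤ 16 * (2 * m) * centralBinom m ^ 2 := by gcongr <;> omega
  · rcases Nat.eq_zero_or_pos m with rfl | hm
    · decide
    have hc : centralBinom m ≤ (2 * m + 1).choose (m + 1) := by
      rw [choose_succ_succ, centralBinom_eq_two_mul_choose]; exact le_add_right _ _
    rw [show (2 * m + 1 + 1) / 2 = m + 1 by omega, pow_succ, pow_mul]
    calc (4 ^ 2) ^ m * 4 = 4 * 16 ^ m := by ring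
      _ ≤ 4 * (4 * m * centralBinom m ^ 2) := by
          gcongr; exact sixteen_pow_le_mul_centralBinom_sq hm
      _ ≤ 16 * (2 * m + 1) * (2 * m + 1).choose (m + 1) ^ 2 := by
          rw [← mul_assoc, ← mul_assoc]; gcongr <;> omega

theorem choose_le_choose_of_half_le {M i j : ℕ} (hi : (M + 1) / 2 ≤ i) (hij : i ≤ j) :
    M.choose j ≤ M.choose i := by
  refine antitoneOn_nat_Ici_of_succ_le (fun l hl => ?_) hi (hi.trans hij) hij
  rcases Nat.lt_or_ge M (l + 1) with h | h
  · rw [choose_eq_zero_of_lt h]; exact Nat.zero_le _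
  · rw [← choose_symm h, ← choose_symm (by omega : l ≤ M), show M - l = M - (l + 1) + 1 by omega]
    exact choose_le_succ_of_lt_half_left (by omega)

theorem choose_mul_pow_le_choose_add_mul_pow {M c s : ℕ} (h : c + s ≤ M) :
    M.choose c * (M - c - s + 1) ^ s ≤ M.choose (c + s) * (c + s) ^ s := by
  induction s with
  | zero => simp
  | succ s ih =>
    have step := choose_succ_right_eq M (c + s)
    calc M.choose c * (M - c - (s + 1) + 1) ^ (s + 1)
        = M.choose c * (M - c - s) ^ s * (M - (c + s)) := by
          rw [show M - c - (s + 1) + 1 = M - c - s by omega,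
            show M - (c + s) = M - c - s by omega]; ring
      _ ≤ M.choose c * (M - c - s + 1) ^ s * (M - (c + s)) := by gcongr; omega
      _ ≤ M.choose (c + s) * (c + s) ^ s * (M - (c + s)) :=
          Nat.mul_le_mul_right _ (ih (by omega))
      _ = M.choose (c + s + 1) * (c + s + 1) * (c + s) ^ s := by rw [step]; ring
      _ ≤ M.choose (c + (s + 1)) * (c + (s + 1)) ^ (s + 1) := by
          rw [← add_assoc, pow_succ _ s, mul_assoc, mul_comm ((c + s + 1) ^ s)]
          exact Nat.mul_le_mul_left _ (Nat.mul_le_mul_left _ (Nat.pow_le_pow_left (by omega) s))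

theorem choose_half_le_two_mul_choose_add {M s : ℕ} (hs : 8 * s ^ 2 ≤ M) :
    (M.choose ((M + 1) / 2) : ℝ) ≤ 2 * M.choose ((M + 1) / 2 + s) := by
  set c := (M + 1) / 2
  rcases Nat.eq_zero_or_pos s with rfl | hs0
  · simp only [add_zero]; linarith [(M.choose c).cast_nonneg (α := ℝ)]
  have hcs : c + s ≤ M := by have := Nat.le_self_pow two_ne_zero s; omega
  have hM : (0 : ℝ) < M := by exact_mod_cast (by omega : 0 < M)
  have hc : (M : ℝ) ≤ 2 * c ∧ 2 * (c : ℝ) ≤ M + 1 := by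
    constructor <;> norm_cast <;> omega
  have hsR : 8 * (s : ℝ) ^ 2 ≤ M := by exact_mod_cast hs
  have hsM : 4 * (s : ℝ) ≤ M := by nlinarith [(one_le_cast (α := ℝ)).mpr hs0]
  have hpos : (0 : ℝ) < c + s := by positivity
  set x : ℝ := 4 * s / M
  have hx : x * M = 4 * s := div_mul_cancel₀ _ hM.ne'
  have hx0 : 0 ≤ x := by positivity
  -- each ratio `C(M, j + 1) / C(M, j) = (M - j) / (j + 1)` with `c ≤ j < c + s` is at least this
  have hratio : 1 - x ≤ ((M : ℝ) - c - s + 1) / (c + s) := by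
    rw [le_div_iff₀ hpos]
    nlinarith [mul_nonneg hx0 (by linarith : (0 : ℝ) ≤ c + s - M / 2)]
  have hhalf : (1 / 2 : ℝ) ≤ (((M : ℝ) - c - s + 1) / (c + s)) ^ s :=
    calc (1 / 2 : ℝ) ≤ 1 + s * -x := by nlinarith
      _ ≤ (1 + -x) ^ s := one_add_mul_le_pow (by nlinarith) s
      _ ≤ _ := pow_le_pow_left₀ (by nlinarith) (by linarith) s
  have hnat : (M.choose c : ℝ) * ((M : ℝ) - c - s + 1) ^ s
      ≤ M.choose (c + s) * ((c : ℝ) + s) ^ s := by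
    have h := choose_mul_pow_le_choose_add_mul_pow hcs
    rw [show M - c - s + 1 = M + 1 - (c + s) by omega] at h
    have h' : ((M.choose c * (M + 1 - (c + s)) ^ s : ℕ) : ℝ)
        ≤ ((M.choose (c + s) * (c + s) ^ s : ℕ) : ℝ) := by exact_mod_cast h
    push_cast [Nat.cast_sub (by omega : c + s ≤ M + 1)] at h'
    rwa [show (M : ℝ) + 1 - (c + s) = M - c - s + 1 by ring] at h'
  have hmain : (M.choose c : ℝ) * (((M : ℝ) - c - s + 1) / (c + s)) ^ s ≤ M.choose (c + s) := by
    rwa [div_pow, ← mul_div_assoc, div_le_iff₀ (by positivity)]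
  nlinarith [(M.choose c).cast_nonneg (α := ℝ)]

theorem inv_thirty_two_le_mul_choose_half_mul_half_pow {M L : ℕ} (hM : 0 < M)
    (hL : M ≤ 64 * L ^ 2) : 1 / 32 ≤ (L : ℝ) * M.choose ((M + 1) / 2) * (1 / 2) ^ M := by
  set X := (L : ℝ) * M.choose ((M + 1) / 2) * (1 / 2) ^ M
  have hcentral : (4 : ℝ) ^ M ≤ 16 * M * (M.choose ((M + 1) / 2) : ℝ) ^ 2 := by
    exact_mod_cast four_pow_le_mul_choose_half_sq hM
  have hLR : (M : ℝ) ≤ 64 * (L : ℝ) ^ 2 := by exact_mod_cast hL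
  have hsq : X ^ 2 * 4 ^ M = (L : ℝ) ^ 2 * (M.choose ((M + 1) / 2) : ℝ) ^ 2 := by
    have h1 : ((1 / 2 : ℝ) ^ M) ^ 2 * 4 ^ M = 1 := by
      rw [← pow_mul, mul_comm M 2, pow_mul, ← mul_pow]; norm_num
    linear_combination (L : ℝ) ^ 2 * (M.choose ((M + 1) / 2) : ℝ) ^ 2 * h1
  have h4 : (0 : ℝ) < 4 ^ M := by positivity
  have hX : 1 ≤ 1024 * X ^ 2 := by
    refine le_of_mul_le_mul_right ?_ h4
    rw [mul_assoc, hsq]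
    nlinarith [sq_nonneg (M.choose ((M + 1) / 2) : ℝ)]
  nlinarith [show 0 ≤ X by positivity]

theorem ceil_natCast_div_two (N : ℕ) : ⌈(N : ℝ) / 2⌉₊ = (N + 1) / 2 := by
  obtain ⟨m, rfl | rfl⟩ := N.even_or_odd'
  · rw [show (2 * m + 1) / 2 = m by omega, Nat.cast_mul, Nat.cast_two,
      mul_div_cancel_left₀ _ two_ne_zero, Nat.ceil_natCast]
  · rw [show (2 * m + 1 + 1) / 2 = m + 1 by omega, Nat.ceil_eq_iff (by omega)]
    push_cast
    constructor <;> linarith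

end Nat

namespace Real

theorem exp_neg_two_mul_le_one_sub {x : ℝ} (hx0 : 0 ≤ x) (hx : x ≤ 1 / 2) :
    exp (-(2 * x)) ≤ 1 - x := by
  have h := add_one_le_exp (2 * x)
  rw [exp_neg, inv_le_iff_one_le_mul₀ (exp_pos _)]
  nlinarith

theorem exp_neg_two_mul_mul_le_one_sub_pow {x : ℝ} (hx0 : 0 ≤ x) (hx : x ≤ 1 / 2) (m : ℕ) :
    exp (-(2 * x * m)) ≤ (1 - x) ^ m := by
  rw [show -(2 * x * m) = m * -(2 * x) by ring, exp_nat_mul]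
  exact pow_le_pow_left₀ (exp_pos _).le (exp_neg_two_mul_le_one_sub hx0 hx) m

theorem half_pow_mul_exp_le_half_sub_pow_mul_half_add_pow {ε : ℝ} (hε0 : 0 ≤ ε) (hε : ε ≤ 1 / 4)
    (u v : ℕ) :
    (1 / 2) ^ (2 * u + v) * exp (-(8 * ε ^ 2 * u + 4 * ε * v))
      ≤ (1 / 2 - ε) ^ (u + v) * (1 / 2 + ε) ^ u := by
  have hsplit : (1 / 2 - ε) ^ (u + v) * (1 / 2 + ε) ^ u
      = (1 / 2) ^ (2 * u + v) * ((1 - 4 * ε ^ 2) ^ u * (1 - 2 * ε) ^ v) := by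
    have e1 : 1 / 2 - ε = 1 / 2 * (1 - 2 * ε) := by ring
    have e2 : 1 / 2 + ε = 1 / 2 * (1 + 2 * ε) := by ring
    rw [show 1 - 4 * ε ^ 2 = (1 - 2 * ε) * (1 + 2 * ε) by ring, e1, e2]
    generalize (1 / 2 : ℝ) = h, 1 - 2 * ε = a, 1 + 2 * ε = b
    ring
  rw [hsplit, show -(8 * ε ^ 2 * u + 4 * ε * v)
    = -(2 * (4 * ε ^ 2) * u) + -(2 * (2 * ε) * v) by ring, exp_add]
  have hu := exp_neg_two_mul_mul_le_one_sub_pow (x := 4 * ε ^ 2) (by positivity) (by nlinarith) u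
  have hv := exp_neg_two_mul_mul_le_one_sub_pow (x := 2 * ε) (by positivity) (by linarith) v
  exact mul_le_mul_of_nonneg_left (mul_le_mul hu hv (exp_pos _).le ((exp_pos _).le.trans hu))
    (by positivity)

end Real

/-- `P(Bin(M, p) ≥ r)`. -/
def binomialTail (p : ℝ) (M r : ℕ) : ℝ :=
  ∑ j ∈ range (M + 1) with r ≤ j, (M.choose j : ℝ) * p ^ j * (1 - p) ^ (M - j)

theorem binomial_term_le_of_half_le {p : ℝ} (hp0 : 0 ≤ p) (hp : p ≤ 1 / 2) {M i j : ℕ}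
    (hi : (M + 1) / 2 ≤ i) (hij : i ≤ j) (hj : j ≤ M) :
    (M.choose j : ℝ) * p ^ j * (1 - p) ^ (M - j) ≤ M.choose i * p ^ i * (1 - p) ^ (M - i) := by
  have hchoose : (M.choose j : ℝ) ≤ M.choose i := by
    exact_mod_cast Nat.choose_le_choose_of_half_le hi hij
  have hq0 : 0 ≤ 1 - p := by linarith
  have hpow : p ^ j * (1 - p) ^ (M - j) ≤ p ^ i * (1 - p) ^ (M - i) :=
    calc p ^ j * (1 - p) ^ (M - j) = p ^ i * (p ^ (j - i) * (1 - p) ^ (M - j)) := by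
          rw [← mul_assoc, ← pow_add, Nat.add_sub_cancel' hij]
      _ ≤ p ^ i * ((1 - p) ^ (j - i) * (1 - p) ^ (M - j)) := by
          gcongr; linarith
      _ = p ^ i * (1 - p) ^ (M - i) := by
          rw [← pow_add, show j - i + (M - j) = M - i by omega]
  rw [mul_assoc, mul_assoc]
  exact mul_le_mul hchoose hpow (by positivity) (by positivity)

theorem mul_binomial_term_le_binomialTail {p : ℝ} (hp0 : 0 ≤ p) (hp : p ≤ 1 / 2) {M r J : ℕ}
    (hr : (M + 1) / 2 ≤ r) (hJ : J ≤ M) :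
    ((J + 1 - r : ℕ) : ℝ) * (M.choose J * p ^ J * (1 - p) ^ (M - J)) ≤ binomialTail p M r := by
  calc ((J + 1 - r : ℕ) : ℝ) * (M.choose J * p ^ J * (1 - p) ^ (M - J))
      = ∑ _j ∈ Icc r J, (M.choose J : ℝ) * p ^ J * (1 - p) ^ (M - J) := by
        rw [sum_const, Nat.card_Icc, nsmul_eq_mul]
    _ ≤ ∑ j ∈ Icc r J, (M.choose j : ℝ) * p ^ j * (1 - p) ^ (M - j) := by
        refine sum_le_sum fun j hj => ?_
        rw [mem_Icc] at hj
        exact binomial_term_le_of_half_le hp0 hp (hr.trans hj.1) hj.2 hJ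
    _ ≤ binomialTail p M r := by
        refine sum_le_sum_of_subset_of_nonneg (fun j hj => ?_) (fun j _ _ => ?_)
        · simp only [mem_Icc, mem_filter, mem_range] at hj ⊢; omega
        · have : 0 ≤ 1 - p := by linarith
          positivity

theorem choose_half_mul_exp_le_binomial_term {M s : ℕ} {ε B : ℝ} (hε0 : 0 ≤ ε) (hε : ε ≤ 1 / 4)
    (hs : 8 * s ^ 2 ≤ M) (hB : 8 * ε ^ 2 * M + 4 * ε * (2 * s + 1) ≤ B) :
    M.choose ((M + 1) / 2) * (1 / 2) ^ M * exp (-B) / 2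
      ≤ M.choose ((M + 1) / 2 + s) * (1 / 2 - ε) ^ ((M + 1) / 2 + s)
          * (1 / 2 + ε) ^ (M - ((M + 1) / 2 + s)) := by
  set J := (M + 1) / 2 + s
  have hJM : J ≤ M := by have := Nat.le_self_pow two_ne_zero s; omega
  -- write `J = u + v` and `M = 2 u + v`
  set u := M - J
  set v := 2 * J - M
  have hpow := half_pow_mul_exp_le_half_sub_pow_mul_half_add_pow hε0 hε u v
  rw [show 2 * u + v = M by omega, show u + v = J by omega] at hpow
  have huv : 8 * ε ^ 2 * u + 4 * ε * v ≤ B := by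
    have hu : (u : ℝ) ≤ M := by exact_mod_cast Nat.sub_le M J
    have hv : (v : ℝ) ≤ 2 * s + 1 := by exact_mod_cast (by omega : v ≤ 2 * s + 1)
    nlinarith [sq_nonneg ε]
  have hchoose := Nat.choose_half_le_two_mul_choose_add hs
  calc M.choose ((M + 1) / 2) * (1 / 2) ^ M * exp (-B) / 2
      ≤ M.choose J * ((1 / 2) ^ M * exp (-(8 * ε ^ 2 * u + 4 * ε * v))) := by
        have hexp : exp (-B) ≤ exp (-(8 * ε ^ 2 * u + 4 * ε * v)) := exp_le_exp.mpr (by linarith)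
        calc M.choose ((M + 1) / 2) * (1 / 2) ^ M * exp (-B) / 2
            = M.choose ((M + 1) / 2) / 2 * ((1 / 2) ^ M * exp (-B)) := by ring
          _ ≤ _ := mul_le_mul (by linarith) (by gcongr) (by positivity) (by positivity)
    _ ≤ M.choose J * ((1 / 2 - ε) ^ J * (1 / 2 + ε) ^ u) := by gcongr
    _ = _ := by ring

theorem exp_div_sixty_four_le_binomialTail {M C : ℕ} {ε K : ℝ} (hK : 1 ≤ K) (hε0 : 0 ≤ ε)
    (hεC : ε * (2 * C + 4) ≤ 1) (hεM : ε ^ 2 * M ≤ K) (hM : (8 * (C + 1)) ^ 2 ≤ M) :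
    exp (-(16 * K + 4)) / 64 ≤ binomialTail (1 / 2 - ε) M ((M + 1) / 2 + C) := by
  obtain ⟨a, ha, haM, hMa⟩ : ∃ a, 8 * (C + 1) ≤ a ∧ a * a ≤ M ∧ M < (a + 1) * (a + 1) :=
    ⟨M.sqrt, Nat.le_sqrt.mpr (by rwa [← sq]), Nat.sqrt_le M, Nat.lt_succ_sqrt M⟩
  -- a window of `L ≈ √M / 8` terms starting at the threshold, ending at `(M + 1) / 2 + s`
  obtain ⟨L, hLa⟩ : ∃ L, L = a / 8 + 1 := ⟨_, rfl⟩
  obtain ⟨s, hsa⟩ : ∃ s, s = C + a / 8 := ⟨_, rfl⟩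
  have h8a : 8 * a ≤ M := le_trans (Nat.mul_le_mul_right a (by omega)) haM
  have hL : M ≤ 64 * L ^ 2 := by nlinarith [(by omega : a + 1 ≤ 8 * L)]
  have hs : 8 * s ^ 2 ≤ M := by nlinarith [(by omega : 4 * s ≤ a)]
  have hεL : ε * L ≤ K := by
    have hLM : (L : ℝ) ^ 2 ≤ M := by exact_mod_cast (by nlinarith [(by omega : L ≤ a)] : L ^ 2 ≤ M)
    nlinarith [mul_nonneg hε0 (L.cast_nonneg (α := ℝ))]
  have hwindow := mul_binomial_term_le_binomialTail (p := 1 / 2 - ε) (by nlinarith) (by linarith)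
    (M := M) (r := (M + 1) / 2 + C) (J := (M + 1) / 2 + s) (by omega) (by omega)
  rw [show (M + 1) / 2 + s + 1 - ((M + 1) / 2 + C) = L by omega,
    show (1 : ℝ) - (1 / 2 - ε) = 1 / 2 + ε by ring] at hwindow
  have hterm := choose_half_mul_exp_le_binomial_term (B := 16 * K + 4) hε0 (by nlinarith) hs (by
    have : (s : ℝ) ≤ C + L := by exact_mod_cast (by omega : s ≤ C + L)
    nlinarith)
  have hcentral := Nat.inv_thirty_two_le_mul_choose_half_mul_half_pow (by omega) hL
  calc exp (-(16 * K + 4)) / 64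
      ≤ L * M.choose ((M + 1) / 2) * (1 / 2) ^ M * exp (-(16 * K + 4)) / 2 := by
        nlinarith [exp_pos (-(16 * K + 4))]
    _ = L * (M.choose ((M + 1) / 2) * (1 / 2) ^ M * exp (-(16 * K + 4)) / 2) := by ring
    _ ≤ _ := (mul_le_mul_of_nonneg_left hterm L.cast_nonneg).trans hwindow

section Product

variable {V : Type*} [Fintype V] [DecidableEq V]

theorem sum_eq_sum_powerset_sum_powerset_compl {β : Type*} [AddCommMonoid β] (T : Finset V)
    (f : Finset V → β) :
    ∑ A : Finset V, f A = ∑ B ∈ T.powerset, ∑ D ∈ Tᶜ.powerset, f (B ∪ D) := by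
  rw [← sum_product']
  refine sum_nbij' (fun A => (A ∩ T, A \ T)) (fun BD => BD.1 ∪ BD.2) ?_ ?_ ?_ ?_ ?_
  · intro A _
    simp only [mem_product, mem_powerset]
    exact ⟨inter_subset_right, by grind [mem_compl]⟩
  · simp
  · intro A _
    rw [union_comm]; exact sdiff_union_inter ..
  · intro BD hBD
    simp only [mem_product, mem_powerset] at hBD
    ext v <;> grind [mem_compl]
  · intro A _; rw [union_comm, sdiff_union_inter]

theorem probEvent_eq_sum_powerset (p : ℝ) {E G : Finset V → Prop} (T : Finset V)
    (hE : ∀ A, E A ↔ G (A ∩ T)) :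
    probEvent p E = ∑ B ∈ T.powerset, if G B then p ^ #B * (1 - p) ^ (#T - #B) else 0 := by
  unfold probEvent
  rw [sum_eq_sum_powerset_sum_powerset_compl T]
  refine sum_congr rfl fun B hB => ?_
  rw [mem_powerset] at hB
  have hsplit : ∀ D ∈ Tᶜ.powerset, (if E (B ∪ D) then configProb p (B ∪ D) else 0)
      = (if G B then p ^ #B * (1 - p) ^ (#T - #B) else 0) * (p ^ #D * (1 - p) ^ (#Tᶜ - #D)) := by
    intro D hD
    rw [mem_powerset, subset_compl_iff_disjoint_right] at hD
    have hinter : (B ∪ D) ∩ T = B := by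
      rw [union_inter_distrib_right, inter_eq_left.mpr hB, disjoint_iff_inter_eq_empty.mp hD,
        union_empty]
    rw [hE, hinter]
    split_ifs
    · have hBT := card_le_card hB
      have hDT : #D ≤ #Tᶜ := card_le_card (subset_compl_iff_disjoint_right.mpr hD)
      have hcard : Fintype.card V = #T + #Tᶜ := by rw [card_add_card_compl]
      rw [configProb, card_union_of_disjoint (hD.mono_right hB).symm, hcard,
        show #T + #Tᶜ - (#B + #D) = (#T - #B) + (#Tᶜ - #D) by omega, pow_add, pow_add]
      ring
    · simp
  rw [sum_congr rfl hsplit, ← mul_sum, sum_pow_mul_eq_add_pow, add_sub_cancel, one_pow, mul_one]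

theorem sum_powerset_ite_le_card_eq_binomialTail {α : Type*} (p : ℝ) (S : Finset α) (r : ℕ) :
    ∑ B ∈ S.powerset, (if r ≤ #B then p ^ #B * (1 - p) ^ (#S - #B) else 0)
      = binomialTail p #S r := by
  rw [sum_powerset, binomialTail, sum_filter]
  refine sum_congr rfl fun j _ => ?_
  rw [sum_congr rfl fun B hB => by rw [(mem_powersetCard.mp hB).2], sum_const,
    card_powersetCard, nsmul_eq_mul]
  split_ifs <;> ring

theorem probEvent_mem_bootSets_one (p : ℝ) (G : SimpleGraph V) (r : ℕ) (x : V) :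
    probEvent p (fun A0 => x ∈ bootSets G r A0 1)
      = p + (1 - p) * binomialTail p #(G.neighborFinset x) r := by
  set S := G.neighborFinset x
  have hxS : x ∉ S := G.notMem_neighborFinset_self x
  rw [probEvent_eq_sum_powerset p (insert x S) (G := fun B => x ∈ B ∨ r ≤ #(S ∩ B)) (fun A => by
    rw [← inter_assoc, inter_right_comm, inter_eq_left.mpr (subset_insert x S)]
    simp [bootSets, S, inter_comm])]
  rw [sum_powerset_insert hxS, card_insert_of_notMem hxS, add_comm,
    ← sum_powerset_ite_le_card_eq_binomialTail, mul_sum]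
  congr 1
  · calc _ = ∑ B ∈ S.powerset, p * (p ^ #B * (1 - p) ^ (#S - #B)) := by
          refine sum_congr rfl fun B hB => ?_
          have hB := mem_powerset.mp hB
          rw [if_pos (Or.inl (mem_insert_self x B)), card_insert_of_notMem (fun h => hxS (hB h)),
            show #S + 1 - (#B + 1) = #S - #B by omega, pow_succ]
          ring
      _ = p := by rw [← mul_sum, sum_pow_mul_eq_add_pow, add_sub_cancel, one_pow, mul_one]
  · refine sum_congr rfl fun B hB => ?_
    have hB := mem_powerset.mp hB
    have hxB : x ∉ B := fun h => hxS (hB h)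
    rw [inter_eq_right.mpr hB, or_iff_right hxB, show #S + 1 - #B = #S - #B + 1 by
      have := card_le_card hB; omega]
    split_ifs <;> ring

end Product

theorem card_filter_hammingDist_eq {n : ℕ} (x : Fin n → Bool) (i : ℕ) :
    #{y | hammingDist x y = i} = n.choose i := by
  rw [show n.choose i = #(powersetCard i (univ : Finset (Fin n))) by simp]
  refine card_nbij' (fun y => ({j | x j ≠ y j} : Finset _)) (fun s j => if j ∈ s then !x j else x j)
    ?_ ?_ ?_ ?_
  · intro y hy
    simpa [mem_powersetCard, hammingDist] using hy
  · intro s hs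
    simp only [mem_coe, mem_powersetCard, subset_univ, true_and] at hs
    simp only [coe_filter, mem_univ, true_and, hammingDist, Set.mem_ofPred_eq]
    rw [← hs]; congr 1; ext j; by_cases hj : j ∈ s <;> simp [hj]
  · intro y _
    funext j; by_cases h : x j = y j <;> simp_all [Bool.eq_not]
  · intro s _
    ext j; by_cases hj : j ∈ s <;> simp [hj]

theorem cubeGraph_card_neighborFinset (n k : ℕ) (x : Fin n → Bool) :
    #((cubeGraph n k).neighborFinset x) = ∑ i ∈ Icc 1 k, n.choose i := by
  have hnbr : (cubeGraph n k).neighborFinset x = ({y | hammingDist x y ∈ Icc 1 k} : Finset _) := by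
    ext y; rw [SimpleGraph.mem_neighborFinset]; simp [cubeGraph]
  rw [hnbr, card_eq_sum_card_fiberwise (f := hammingDist x) (t := Icc 1 k)
    (fun y hy => by simpa using hy)]
  refine sum_congr rfl fun i hi => ?_
  rw [← card_filter_hammingDist_eq x i, filter_filter]
  exact congrArg card (filter_congr fun y _ => ⟨And.right, fun h => ⟨h ▸ hi, h⟩⟩)

theorem rpow_neg_div_two_le_inv {n k : ℕ} (hn : 0 < n) (hk : 2 ≤ k) :
    (n : ℝ) ^ (-(k : ℝ) / 2) ≤ 1 / n := by
  rw [one_div, ← rpow_neg_one]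
  exact rpow_le_rpow_of_exponent_le (by exact_mod_cast hn)
    (by linarith [(Nat.ofNat_le_cast (α := ℝ)).mpr hk])

theorem sq_rpow_neg_div_two_mul_sum_choose_le {n : ℕ} (hn : 0 < n) (k : ℕ) :
    ((n : ℝ) ^ (-(k : ℝ) / 2)) ^ 2 * ((∑ i ∈ Icc 1 k, n.choose i : ℕ) : ℝ) ≤ (k : ℝ) := by
  have hsum : ∑ i ∈ Icc 1 k, n.choose i ≤ k * n ^ k :=
    calc ∑ i ∈ Icc 1 k, n.choose i ≤ ∑ _i ∈ Icc 1 k, n ^ k :=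
          sum_le_sum fun i hi => (n.choose_le_pow i).trans
            (Nat.pow_le_pow_right hn (mem_Icc.mp hi).2)
      _ = k * n ^ k := by simp
  have hnR : (0 : ℝ) < n := by exact_mod_cast hn
  have hsq : ((n : ℝ) ^ (-(k : ℝ) / 2)) ^ 2 * (n : ℝ) ^ k = 1 := by
    rw [← rpow_natCast, ← rpow_mul hnR.le, ← rpow_natCast, ← rpow_add hnR]
    norm_num
  calc ((n : ℝ) ^ (-(k : ℝ) / 2)) ^ 2 * ((∑ i ∈ Icc 1 k, n.choose i : ℕ) : ℝ)
      ≤ ((n : ℝ) ^ (-(k : ℝ) / 2)) ^ 2 * (k * (n : ℝ) ^ k) := by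
        gcongr; exact_mod_cast hsum
    _ = (k : ℝ) := by rw [mul_left_comm, hsq, mul_one]

/-- For a fixed integer `k ≥ 2`, with initial infection probability
`p = 1/2 - n^{-k/2}` and threshold `r = ⌈N/2⌉ + C(3k,2k)` (where `N = ∑_{i=1}^k C(n,i)`),
there is an absolute constant `δ > 0` such that for all sufficiently large `n` and every
vertex `x` of `Q_{k,n}`, `P(x ∈ A_{1,r}) ≥ 1/2 + δ`. -/
theorem step_one_infection_prob_Qkn (k : ℕ) (hk : 2 ≤ k) :
    ∃ δ : ℝ, 0 < δ ∧ ∃ n₀ : ℕ, ∀ n ≥ n₀, ∀ x : Fin n → Bool,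
      1 / 2 + δ ≤
        probEvent (1 / 2 - (n : ℝ) ^ (-(k : ℝ) / 2))
          (fun A0 => x ∈ bootSets (cubeGraph n k)
            (⌈((∑ i ∈ Finset.Icc 1 k, n.choose i : ℕ) : ℝ) / 2⌉₊ + (3 * k).choose (2 * k))
            A0 1) := by
  set C := (3 * k).choose (2 * k)
  set T := exp (-(16 * (k : ℝ) + 4)) / 64
  have hT : 0 < T := by positivity
  refine ⟨T / 4, by positivity, (8 * (C + 1)) ^ 2 + ⌈4 / T⌉₊, fun n hn x => ?_⟩
  set ε := (n : ℝ) ^ (-(k : ℝ) / 2)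
  have hn0 : 0 < n := lt_of_lt_of_le (by positivity) hn
  have hε0 : 0 ≤ ε := by positivity
  have hεn : ε * n ≤ 1 := by
    have := rpow_neg_div_two_le_inv hn0 hk
    rwa [le_div_iff₀ (by positivity)] at this
  have hnT : 4 ≤ n * T := by
    rw [← div_le_iff₀ hT]
    exact (Nat.le_ceil _).trans (by exact_mod_cast (by omega : ⌈4 / T⌉₊ ≤ n))
  have hnC : 2 * (C : ℝ) + 4 ≤ n := by exact_mod_cast (by nlinarith : 2 * C + 4 ≤ n)
  have hnN : n ≤ ∑ i ∈ Icc 1 k, n.choose i :=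
    n.choose_one_right.symm.le.trans (single_le_sum (fun _ _ => Nat.zero_le _) (by simp; omega))
  have htail : T ≤ _ := exp_div_sixty_four_le_binomialTail (K := k)
    (by exact_mod_cast (by omega : 1 ≤ k)) hε0 (by nlinarith)
    (sq_rpow_neg_div_two_mul_sum_choose_le hn0 k) (by omega)
  rw [probEvent_mem_bootSets_one, cubeGraph_card_neighborFinset, Nat.ceil_natCast_div_two,
    show (1 : ℝ) - (1 / 2 - ε) = 1 / 2 + ε by ring]
  nlinarith [mul_le_mul_of_nonneg_left htail (by positivity : (0 : ℝ) ≤ 1 / 2 + ε)]
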